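/- Let the MPS be in canonical form with normalized wavefunction Σ_σ |Ψ(σ)|² = 1, and let χ' ≥ 1 be a truncation rank with 2 ε(χ') < 1 (so that Ψ̃_T ≠ 0). Let Ψ_T = Ψ̃_T / ‖Ψ̃_T‖ be the renormalized truncated wavefunction. Then the wavefunction fidelity satisfies 𝓕₂ = |⟨Ψ, Ψ_T⟩|² ≥ 1 − 2 ε(χ'). -/

import Mathlib

open Matrix

/-- Partial product `Λ⁰ Γ¹ Λ¹ ⋯ Γⁱ Λⁱ` of an MPS; the tensor `Γ i` is the site tensor
of site `i + 1` (sites are numbered `1, …, N`, bonds `0, 1, …, N`). -/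
noncomputable def mpsW {d : ℕ} (χ : ℕ → ℕ)
    (Γ : (i : ℕ) → Fin d → Matrix (Fin (χ i)) (Fin (χ (i + 1))) ℂ)
    (Λ : (i : ℕ) → Matrix (Fin (χ i)) (Fin (χ i)) ℂ) :
    (i : ℕ) → (ℕ → Fin d) → Matrix (Fin (χ 0)) (Fin (χ i)) ℂ
  | 0, _ => Λ 0
  | (i + 1), σ => mpsW χ Γ Λ i σ * Γ i (σ i) * Λ (i + 1)

/-- The MPS wavefunction `Ψ(σ)`: the unique entry (written as the sum of all entries) of the
`1 × 1` matrix `Λ⁰ Γ¹ Λ¹ Γ² Λ² ⋯ Γᴺ Λᴺ` (the bond dimensions satisfy `χ 0 = χ N = 1`). -/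
noncomputable def mpsPsi {d : ℕ} [NeZero d] (N : ℕ) (χ : ℕ → ℕ)
    (Γ : (i : ℕ) → Fin d → Matrix (Fin (χ i)) (Fin (χ (i + 1))) ℂ)
    (Λ : (i : ℕ) → Matrix (Fin (χ i)) (Fin (χ i)) ℂ)
    (σ : Fin N → Fin d) : ℂ :=
  ∑ a, ∑ b, mpsW χ Γ Λ N (fun k => if h : k < N then σ ⟨k, h⟩ else 0) a b

/-- The diagonal projector `P` onto the first `χ'` basis vectors. -/
noncomputable def truncP (χ' k : ℕ) : Matrix (Fin k) (Fin k) ℂ :=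
  Matrix.diagonal fun α => if (α : ℕ) < χ' then 1 else 0

/-- Partial product of the truncated MPS, with the projector `P` inserted at every
interior bond `i = 1, …, N - 1`. -/
noncomputable def mpsWT {d : ℕ} (N χ' : ℕ) (χ : ℕ → ℕ)
    (Γ : (i : ℕ) → Fin d → Matrix (Fin (χ i)) (Fin (χ (i + 1))) ℂ)
    (Λ : (i : ℕ) → Matrix (Fin (χ i)) (Fin (χ i)) ℂ) :
    (i : ℕ) → (ℕ → Fin d) → Matrix (Fin (χ 0)) (Fin (χ i)) ℂ
  | 0, _ => Λ 0
  | (i + 1), σ => mpsWT N χ' χ Γ Λ i σ * Γ i (σ i) * Λ (i + 1) *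
      (if i + 1 < N then truncP χ' (χ (i + 1)) else 1)

/-- The truncated wavefunction `Ψ̃_T(σ)`: the unique entry of
`Λ⁰ Γ¹ Λ¹ P₁ Γ² Λ² P₂ ⋯ P_{N-1} Γᴺ Λᴺ`. -/
noncomputable def mpsPsiT {d : ℕ} [NeZero d] (N χ' : ℕ) (χ : ℕ → ℕ)
    (Γ : (i : ℕ) → Fin d → Matrix (Fin (χ i)) (Fin (χ (i + 1))) ℂ)
    (Λ : (i : ℕ) → Matrix (Fin (χ i)) (Fin (χ i)) ℂ)
    (σ : Fin N → Fin d) : ℂ :=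
  ∑ a, ∑ b, mpsWT N χ' χ Γ Λ N (fun k => if h : k < N then σ ⟨k, h⟩ else 0) a b

/-- Canonical form: for every site `i + 1` (`i < N`), with `A = Λ i * Γ i s` and
`B = Γ i s * Λ (i+1)`, one has `∑ s, Aᴴ A = 1` and `∑ s, B Bᴴ = 1`. -/
noncomputable def IsCanonicalMPS {d : ℕ} (N : ℕ) (χ : ℕ → ℕ)
    (Γ : (i : ℕ) → Fin d → Matrix (Fin (χ i)) (Fin (χ (i + 1))) ℂ)
    (Λ : (i : ℕ) → Matrix (Fin (χ i)) (Fin (χ i)) ℂ) : Prop :=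
  ∀ i < N,
    (∑ s : Fin d, (Λ i * Γ i s)ᴴ * (Λ i * Γ i s) = 1) ∧
    (∑ s : Fin d, (Γ i s * Λ (i + 1)) * (Γ i s * Λ (i + 1))ᴴ = 1)

/-- Local truncation error `ε_i(χ') = ∑_{α ≥ χ'} (Λ^{[i]}_{αα})²`. -/
noncomputable def locErr (χ' : ℕ) (χ : ℕ → ℕ)
    (Λ : (i : ℕ) → Matrix (Fin (χ i)) (Fin (χ i)) ℂ) (i : ℕ) : ℝ :=
  ∑ α : Fin (χ i), if χ' ≤ (α : ℕ) then ((Λ i α α).re) ^ 2 else 0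

/-- Global truncation error `ε(χ') = ∑_{i=1}^{N-1} ε_i(χ')`. -/
noncomputable def globErr (N χ' : ℕ) (χ : ℕ → ℕ)
    (Λ : (i : ℕ) → Matrix (Fin (χ i)) (Fin (χ i)) ℂ) : ℝ :=
  ∑ i ∈ Finset.Ico 1 N, locErr χ' χ Λ i


/-!
Sweep the chain from left to right with the environments `G_k = ∑_τ W_kᴴ W̃_k`,
`H_k = ∑_τ W_kᴴ W_k` and `K_k = ∑_τ W̃_kᴴ W̃_k`, where `W_k`, `W̃_k` are the untruncated and
truncated partial products and `τ` runs over the configurations of the first `k` sites. One step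
applies the transfer map `X ↦ ∑_s B_sᴴ X B_s` of the next site (followed by the projector on the
truncated side). Left canonical form gives `H_k = Λ_k²` and, since cutting a diagonal matrix by a
diagonal projector only lowers it, `K_k ≤ Λ_k²` in the Loewner order. Right canonical form makes
the transfer map trace preserving, so at an interior bond `tr G` changes only by the discarded
diagonal entries `α ≥ χ'`, each at most `λ_α²` by Cauchy–Schwarz against `H` and `K`.
Telescoping from `tr G_0 = 1` to `tr G_N = ⟨Ψ, Ψ̃_T⟩` gives `‖⟨Ψ, Ψ̃_T⟩ - 1‖ ≤ ε`, while
`‖Ψ̃_T‖² = tr K_N ≤ 1`; hence the fidelity is at least `(1 - ε)² ≥ 1 - 2ε`.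
-/

open scoped ComplexOrder MatrixOrder

section TransferMap

variable {𝕜 ι κ m n p : Type*} [RCLike 𝕜] [Fintype ι] [Fintype κ] [Fintype m]

theorem norm_diag_le_of_le {A C : Matrix n n 𝕜} (hA : 0 ≤ A) (hAC : A ≤ C) (j : n) :
    ‖A j j‖ ≤ ‖C j j‖ := by
  have h0 : 0 ≤ A j j := (nonneg_iff_posSemidef.mp hA).diag_nonneg
  have h1 : A j j ≤ C j j := by simpa using (le_iff.mp hAC).diag_nonneg (i := j)
  rw [← RCLike.ofReal_le_ofReal (K := 𝕜), RCLike.norm_of_nonneg' h0,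
    RCLike.norm_of_nonneg' (h0.trans h1)]
  exact h1

theorem trace_le_trace_of_le [Fintype n] {A C : Matrix n n 𝕜} (h : A ≤ C) :
    A.trace ≤ C.trace := by
  simpa [trace_sub] using (le_iff.mp h).trace_nonneg

theorem norm_sum_conjTranspose_mul_apply_sq_le (A B : ι → Matrix m n 𝕜) (j : n) :
    ‖(∑ i, (A i)ᴴ * B i) j j‖ ^ 2 ≤ ‖(∑ i, (A i)ᴴ * A i) j j‖ * ‖(∑ i, (B i)ᴴ * B i) j j‖ := by
  let col (C : ι → Matrix m n 𝕜) : EuclideanSpace 𝕜 (ι × m) :=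
    WithLp.toLp 2 fun x => C x.1 x.2 j
  have hinner (C D : ι → Matrix m n 𝕜) :
      (∑ i, (C i)ᴴ * D i) j j = inner 𝕜 (col C) (col D) := by
    simp [col, Matrix.sum_apply, Matrix.mul_apply, Fintype.sum_prod_type, PiLp.inner_apply,
      mul_comm]
  simp only [hinner, inner_self_eq_norm_sq_to_K, norm_pow, RCLike.norm_ofReal, abs_norm]
  rw [← mul_pow]
  exact pow_le_pow_left₀ (norm_nonneg _) (norm_inner_le_norm _ _) 2

theorem star_sum_sum_mul_sum_sum_eq_trace [Fintype n] [Unique m] [Unique n]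
    (X Y : Matrix m n 𝕜) :
    star (∑ a, ∑ b, X a b) * ∑ a, ∑ b, Y a b = (Xᴴ * Y).trace := by
  simp [trace, Matrix.mul_apply]

def transferMap (B : ι → Matrix m n 𝕜) (X : Matrix m m 𝕜) : Matrix n n 𝕜 :=
  ∑ s, (B s)ᴴ * X * B s

theorem trace_transferMap [Fintype n] [DecidableEq m] {B : ι → Matrix m n 𝕜}
    (hB : ∑ s, B s * (B s)ᴴ = 1) (X : Matrix m m 𝕜) :
    (transferMap B X).trace = X.trace := by
  simp only [transferMap, trace_sum, trace_mul_cycle (B _)ᴴ]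
  rw [← trace_sum, ← Finset.sum_mul, hB, Matrix.one_mul]

theorem transferMap_mono [Fintype n] (B : ι → Matrix m n 𝕜) {X Y : Matrix m m 𝕜}
    (h : X ≤ Y) :
    transferMap B X ≤ transferMap B Y := by
  rw [le_iff] at h ⊢
  convert posSemidef_sum Finset.univ fun s _ => h.conjTranspose_mul_mul_same (B s) using 1
  simp only [transferMap, ← Finset.sum_sub_distrib, Matrix.mul_sub, Matrix.sub_mul]

theorem transferMap_nonneg [Fintype n] (B : ι → Matrix m n 𝕜) {X : Matrix m m 𝕜}
    (h : 0 ≤ X) :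
    0 ≤ transferMap B X := by
  simpa [transferMap] using transferMap_mono B h

theorem transferMap_sum_conjTranspose_mul [Fintype p] (B : ι → Matrix m n 𝕜)
    (X Y : κ → Matrix p m 𝕜) :
    transferMap B (∑ τ, (X τ)ᴴ * Y τ) = ∑ x : κ × ι, (X x.1 * B x.2)ᴴ * (Y x.1 * B x.2) := by
  simp only [transferMap, Matrix.sum_mul, Matrix.mul_sum, Fintype.sum_prod_type,
    conjTranspose_mul, Matrix.mul_assoc]
  exact Finset.sum_comm

theorem norm_transferMap_gram_apply_sq_le [Fintype p] (B : ι → Matrix m n 𝕜)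
    (X Y : κ → Matrix p m 𝕜) (j : n) :
    ‖transferMap B (∑ τ, (X τ)ᴴ * Y τ) j j‖ ^ 2 ≤
      ‖transferMap B (∑ τ, (X τ)ᴴ * X τ) j j‖ * ‖transferMap B (∑ τ, (Y τ)ᴴ * Y τ) j j‖ := by
  simp only [transferMap_sum_conjTranspose_mul]
  exact norm_sum_conjTranspose_mul_apply_sq_le _ _ j

end TransferMap

theorem sum_fun_fin_succ_eq_sum_snoc {α M : Type*} [Fintype α] [AddCommMonoid M] (k : ℕ)
    (f : (Fin (k + 1) → α) → M) :
    ∑ τ, f τ = ∑ x : (Fin k → α) × α, f (Fin.snoc x.1 x.2) :=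
  (Fintype.sum_equiv ((Equiv.prodComm _ _).trans (Fin.snocEquiv fun _ => α)) _ _
    fun _ => rfl).symm

noncomputable def bondProj (N χ' : ℕ) (χ : ℕ → ℕ) (j : ℕ) :
    Matrix (Fin (χ j)) (Fin (χ j)) ℂ :=
  if j < N then truncP χ' (χ j) else 1

theorem truncP_conjugate_le {n : ℕ} (χ' : ℕ) {D : Matrix (Fin n) (Fin n) ℂ} (hD : D.IsDiag) :
    (truncP χ' n)ᴴ * (Dᴴ * D) * truncP χ' n ≤ Dᴴ * D := by
  rw [le_iff, ← hD.diagonal_diag]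
  simp only [truncP, diagonal_conjTranspose, diagonal_mul_diagonal, diagonal_sub]
  refine PosSemidef.diagonal fun α => ?_
  by_cases h : (α : ℕ) < χ' <;> simp [h, Complex.conj_mul']

theorem trace_sub_trace_mul_truncP {n : ℕ} (χ' : ℕ) (M : Matrix (Fin n) (Fin n) ℂ) :
    M.trace - (M * truncP χ' n).trace =
      ∑ α : Fin n, if χ' ≤ (α : ℕ) then M α α else 0 := by
  simp only [truncP, trace, diag_apply, mul_diagonal, ← Finset.sum_sub_distrib]
  refine Finset.sum_congr rfl fun α _ => ?_
  by_cases h : χ' ≤ (α : ℕ) <;> simp [h, Nat.not_lt.mpr, Nat.lt_of_not_le]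

theorem norm_conjTranspose_mul_self_apply {n : ℕ} {D : Matrix (Fin n) (Fin n) ℂ}
    (hD : D.IsDiag) {α : Fin n} (him : (D α α).im = 0) : ‖(Dᴴ * D) α α‖ = (D α α).re ^ 2 := by
  rw [← hD.diagonal_diag, diagonal_conjTranspose, diagonal_mul_diagonal, diagonal_apply_eq,
    Pi.star_apply, norm_mul, norm_star, ← sq, Complex.sq_norm, Complex.normSq_apply]
  simp [him, sq]

theorem globErr_eq_sum_range (N χ' : ℕ) (χ : ℕ → ℕ)
    (Λ : (i : ℕ) → Matrix (Fin (χ i)) (Fin (χ i)) ℂ) :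
    globErr N χ' χ Λ =
      ∑ k ∈ Finset.range N, if k + 1 < N then locErr χ' χ Λ (k + 1) else 0 := by
  cases N with
  | zero => simp [globErr]
  | succ N =>
    rw [Finset.sum_range_succ, if_neg (lt_irrefl _), add_zero, globErr,
      Finset.sum_Ico_eq_sum_range, Nat.add_sub_cancel]
    refine Finset.sum_congr rfl fun k hk => ?_
    rw [if_pos (by simpa using hk), add_comm]

section MPS

variable {d : ℕ} {χ : ℕ → ℕ} (Γ : (i : ℕ) → Fin d → Matrix (Fin (χ i)) (Fin (χ (i + 1))) ℂ)
  (Λ : (i : ℕ) → Matrix (Fin (χ i)) (Fin (χ i)) ℂ)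

-- The right-canonical tensor `B^{[k+1]}` of the paper.
def siteB (k : ℕ) (s : Fin d) : Matrix (Fin (χ k)) (Fin (χ (k + 1))) ℂ :=
  Γ k s * Λ (k + 1)

theorem mpsW_congr {k : ℕ} {σ τ : ℕ → Fin d} (h : ∀ i < k, σ i = τ i) :
    mpsW χ Γ Λ k σ = mpsW χ Γ Λ k τ := by
  induction k with
  | zero => rfl
  | succ k ih =>
    simp only [mpsW, ih fun i hi => h i (by omega), h k (by omega)]

theorem mpsWT_congr (N χ' : ℕ) {k : ℕ} {σ τ : ℕ → Fin d} (h : ∀ i < k, σ i = τ i) :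
    mpsWT N χ' χ Γ Λ k σ = mpsWT N χ' χ Γ Λ k τ := by
  induction k with
  | zero => rfl
  | succ k ih =>
    simp only [mpsWT, ih fun i hi => h i (by omega), h k (by omega)]

theorem bondProj_conjugate_le (N χ' j : ℕ) (hΛ : (Λ j).IsDiag) :
    (bondProj N χ' χ j)ᴴ * ((Λ j)ᴴ * Λ j) * bondProj N χ' χ j ≤ (Λ j)ᴴ * Λ j := by
  unfold bondProj
  split_ifs
  · exact truncP_conjugate_le χ' hΛ
  · simp

theorem transferMap_siteB_conjTranspose_mul_self {N : ℕ} (hcano : IsCanonicalMPS N χ Γ Λ)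
    {k : ℕ} (hk : k < N) :
    transferMap (siteB Γ Λ k) ((Λ k)ᴴ * Λ k) = (Λ (k + 1))ᴴ * Λ (k + 1) := by
  have h := congrArg (fun X => (Λ (k + 1))ᴴ * X * Λ (k + 1)) (hcano k hk).1
  simp only [Finset.mul_sum, Finset.sum_mul, Matrix.mul_one, conjTranspose_mul,
    Matrix.mul_assoc] at h
  simpa only [transferMap, siteB, conjTranspose_mul, Matrix.mul_assoc] using h

variable [NeZero d]

-- The same extension by `0` as in `mpsPsi`, so that `mpsPsi N χ Γ Λ σ` unfolds to the entry sum
-- of `mpsW χ Γ Λ N (extendCfg σ)`.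
def extendCfg {k : ℕ} (τ : Fin k → Fin d) : ℕ → Fin d :=
  fun j => if h : j < k then τ ⟨j, h⟩ else 0

theorem extendCfg_snoc_of_lt {k : ℕ} (τ : Fin k → Fin d) (s : Fin d) {i : ℕ} (hi : i < k) :
    extendCfg (Fin.snoc τ s : Fin (k + 1) → Fin d) i = extendCfg τ i := by
  simp [extendCfg, hi, Nat.lt_succ_of_lt hi, Fin.snoc, Fin.castLT]

theorem extendCfg_snoc_self {k : ℕ} (τ : Fin k → Fin d) (s : Fin d) :
    extendCfg (Fin.snoc τ s : Fin (k + 1) → Fin d) k = s := by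
  simp [extendCfg, Fin.snoc]

theorem mpsW_extendCfg_snoc {k : ℕ} (τ : Fin k → Fin d) (s : Fin d) :
    mpsW χ Γ Λ (k + 1) (extendCfg (Fin.snoc τ s : Fin (k + 1) → Fin d)) =
      mpsW χ Γ Λ k (extendCfg τ) * siteB Γ Λ k s := by
  rw [mpsW, mpsW_congr Γ Λ fun i hi => extendCfg_snoc_of_lt τ s hi, extendCfg_snoc_self,
    siteB, Matrix.mul_assoc]

theorem mpsWT_extendCfg_snoc (N χ' : ℕ) {k : ℕ} (τ : Fin k → Fin d) (s : Fin d) :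
    mpsWT N χ' χ Γ Λ (k + 1) (extendCfg (Fin.snoc τ s : Fin (k + 1) → Fin d)) =
      mpsWT N χ' χ Γ Λ k (extendCfg τ) * siteB Γ Λ k s * bondProj N χ' χ (k + 1) := by
  rw [mpsWT, mpsWT_congr Γ Λ N χ' fun i hi => extendCfg_snoc_of_lt τ s hi,
    extendCfg_snoc_self, siteB, Matrix.mul_assoc (mpsWT _ _ _ _ _ _ _), bondProj]

def leftEnv (X Y : (k : ℕ) → (ℕ → Fin d) → Matrix (Fin (χ 0)) (Fin (χ k)) ℂ) (k : ℕ) :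
    Matrix (Fin (χ k)) (Fin (χ k)) ℂ :=
  ∑ τ : Fin k → Fin d, (X k (extendCfg τ))ᴴ * Y k (extendCfg τ)

theorem leftEnv_mpsW_succ (k : ℕ) :
    leftEnv (mpsW χ Γ Λ) (mpsW χ Γ Λ) (k + 1) =
      transferMap (siteB Γ Λ k) (leftEnv (mpsW χ Γ Λ) (mpsW χ Γ Λ) k) := by
  rw [leftEnv, leftEnv, transferMap_sum_conjTranspose_mul, sum_fun_fin_succ_eq_sum_snoc]
  simp only [mpsW_extendCfg_snoc]

theorem leftEnv_mpsWT_succ (N χ' k : ℕ) :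
    leftEnv (mpsWT N χ' χ Γ Λ) (mpsWT N χ' χ Γ Λ) (k + 1) =
      (bondProj N χ' χ (k + 1))ᴴ *
        transferMap (siteB Γ Λ k) (leftEnv (mpsWT N χ' χ Γ Λ) (mpsWT N χ' χ Γ Λ) k) *
          bondProj N χ' χ (k + 1) := by
  rw [leftEnv, leftEnv, transferMap_sum_conjTranspose_mul, sum_fun_fin_succ_eq_sum_snoc,
    Finset.mul_sum, Finset.sum_mul]
  simp only [mpsWT_extendCfg_snoc, conjTranspose_mul, Matrix.mul_assoc]

theorem leftEnv_overlap_succ (N χ' k : ℕ) :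
    leftEnv (mpsW χ Γ Λ) (mpsWT N χ' χ Γ Λ) (k + 1) =
      transferMap (siteB Γ Λ k) (leftEnv (mpsW χ Γ Λ) (mpsWT N χ' χ Γ Λ) k) *
        bondProj N χ' χ (k + 1) := by
  rw [leftEnv, leftEnv, transferMap_sum_conjTranspose_mul, sum_fun_fin_succ_eq_sum_snoc,
    Finset.sum_mul]
  simp only [mpsW_extendCfg_snoc, mpsWT_extendCfg_snoc, Matrix.mul_assoc]

theorem leftEnv_mpsW_eq {N : ℕ} (hcano : IsCanonicalMPS N χ Γ Λ) {k : ℕ} (hk : k ≤ N) :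
    leftEnv (mpsW χ Γ Λ) (mpsW χ Γ Λ) k = (Λ k)ᴴ * Λ k := by
  induction k with
  | zero => simp [leftEnv, mpsW]
  | succ k ih =>
    rw [leftEnv_mpsW_succ, ih (by omega),
      transferMap_siteB_conjTranspose_mul_self Γ Λ hcano hk]

theorem leftEnv_mpsWT_le {N : ℕ} (χ' : ℕ) (hcano : IsCanonicalMPS N χ Γ Λ)
    (hΛ : ∀ i ≤ N, (Λ i).IsDiag) {k : ℕ} (hk : k ≤ N) :
    leftEnv (mpsWT N χ' χ Γ Λ) (mpsWT N χ' χ Γ Λ) k ≤ (Λ k)ᴴ * Λ k := by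
  induction k with
  | zero => simp [leftEnv, mpsWT]
  | succ k ih =>
    rw [leftEnv_mpsWT_succ]
    calc _ ≤ (bondProj N χ' χ (k + 1))ᴴ * ((Λ (k + 1))ᴴ * Λ (k + 1)) *
          bondProj N χ' χ (k + 1) := by
          rw [← transferMap_siteB_conjTranspose_mul_self Γ Λ hcano hk]
          exact star_left_conjugate_le_conjugate (transferMap_mono _ (ih (by omega))) _
      _ ≤ _ := bondProj_conjugate_le Λ N χ' (k + 1) (hΛ _ hk)

theorem leftEnv_self_nonneg (X : (k : ℕ) → (ℕ → Fin d) → Matrix (Fin (χ 0)) (Fin (χ k)) ℂ)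
    (k : ℕ) : 0 ≤ leftEnv X X k :=
  nonneg_iff_posSemidef.mpr <|
    posSemidef_sum _ fun _ _ => posSemidef_conjTranspose_mul_self _

theorem norm_transferMap_leftEnv_overlap_apply_le {N : ℕ} (χ' : ℕ)
    (hcano : IsCanonicalMPS N χ Γ Λ) (hΛ : ∀ i ≤ N, (Λ i).IsDiag) {k : ℕ} (hk : k < N)
    (α : Fin (χ (k + 1))) :
    ‖transferMap (siteB Γ Λ k) (leftEnv (mpsW χ Γ Λ) (mpsWT N χ' χ Γ Λ) k) α α‖ ≤
      ‖((Λ (k + 1))ᴴ * Λ (k + 1)) α α‖ := by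
  have hD := transferMap_siteB_conjTranspose_mul_self Γ Λ hcano hk
  have hCS : ‖transferMap (siteB Γ Λ k) (leftEnv (mpsW χ Γ Λ) (mpsWT N χ' χ Γ Λ) k) α α‖ ^ 2 ≤
      ‖transferMap (siteB Γ Λ k) (leftEnv (mpsW χ Γ Λ) (mpsW χ Γ Λ) k) α α‖ *
        ‖transferMap (siteB Γ Λ k) (leftEnv (mpsWT N χ' χ Γ Λ) (mpsWT N χ' χ Γ Λ) k) α α‖ :=
    norm_transferMap_gram_apply_sq_le _ _ _ α
  have hK : ‖transferMap (siteB Γ Λ k) (leftEnv (mpsWT N χ' χ Γ Λ) (mpsWT N χ' χ Γ Λ) k) α α‖ ≤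
      ‖((Λ (k + 1))ᴴ * Λ (k + 1)) α α‖ :=
    hD ▸ norm_diag_le_of_le (transferMap_nonneg _ (leftEnv_self_nonneg _ k))
      (transferMap_mono _ (leftEnv_mpsWT_le Γ Λ χ' hcano hΛ hk.le)) α
  rw [leftEnv_mpsW_eq Γ Λ hcano hk.le, hD] at hCS
  exact pow_le_pow_iff_left₀ (norm_nonneg _) (norm_nonneg _) two_ne_zero |>.mp
    (hCS.trans (by rw [sq]; gcongr))

theorem norm_trace_leftEnv_overlap_succ_sub_le {N : ℕ} (χ' : ℕ)
    (hcano : IsCanonicalMPS N χ Γ Λ) (hΛ : ∀ i ≤ N, (Λ i).IsDiag)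
    (hΛreal : ∀ i ≤ N, ∀ α, (Λ i α α).im = 0) {k : ℕ} (hk : k < N) :
    ‖(leftEnv (mpsW χ Γ Λ) (mpsWT N χ' χ Γ Λ) (k + 1)).trace -
        (leftEnv (mpsW χ Γ Λ) (mpsWT N χ' χ Γ Λ) k).trace‖ ≤
      if k + 1 < N then locErr χ' χ Λ (k + 1) else 0 := by
  rw [leftEnv_overlap_succ, ← trace_transferMap (B := siteB Γ Λ k) (hcano k hk).2,
    bondProj]
  split_ifs with hk1
  · rw [norm_sub_rev, trace_sub_trace_mul_truncP, locErr]
    refine (norm_sum_le _ _).trans (Finset.sum_le_sum fun α _ => ?_)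
    split_ifs
    · rw [← norm_conjTranspose_mul_self_apply (hΛ _ hk1.le) (hΛreal _ hk1.le α)]
      exact norm_transferMap_leftEnv_overlap_apply_le Γ Λ χ' hcano hΛ hk α
    · simp
  · simp

theorem norm_trace_leftEnv_overlap_sub_le {N : ℕ} (χ' : ℕ)
    (hcano : IsCanonicalMPS N χ Γ Λ) (hΛ : ∀ i ≤ N, (Λ i).IsDiag)
    (hΛreal : ∀ i ≤ N, ∀ α, (Λ i α α).im = 0) :
    ‖(leftEnv (mpsW χ Γ Λ) (mpsWT N χ' χ Γ Λ) N).trace -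
        (leftEnv (mpsW χ Γ Λ) (mpsWT N χ' χ Γ Λ) 0).trace‖ ≤ globErr N χ' χ Λ := by
  rw [globErr_eq_sum_range, norm_sub_rev, ← dist_eq_norm (E := ℂ)]
  refine dist_le_range_sum_of_dist_le
    (f := fun k => (leftEnv (mpsW χ Γ Λ) (mpsWT N χ' χ Γ Λ) k).trace) N fun hk => ?_
  rw [dist_comm, dist_eq_norm]
  exact norm_trace_leftEnv_overlap_succ_sub_le Γ Λ χ' hcano hΛ hΛreal hk

theorem trace_leftEnv_overlap_zero (N χ' : ℕ) (hχ0 : χ 0 = 1) (hΛ0 : Λ 0 = 1) :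
    (leftEnv (mpsW χ Γ Λ) (mpsWT N χ' χ Γ Λ) 0).trace = 1 := by
  simp [leftEnv, mpsW, mpsWT, hΛ0, hχ0]

theorem sum_star_mul_eq_trace_leftEnv {N : ℕ} (hχ0 : χ 0 = 1) (hχN : χ N = 1)
    (X Y : (k : ℕ) → (ℕ → Fin d) → Matrix (Fin (χ 0)) (Fin (χ k)) ℂ) :
    ∑ σ : Fin N → Fin d,
        star (∑ a, ∑ b, X N (extendCfg σ) a b) * ∑ a, ∑ b, Y N (extendCfg σ) a b =
      (leftEnv X Y N).trace := by
  have : Unique (Fin (χ 0)) := (finCongr hχ0).unique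
  have : Unique (Fin (χ N)) := (finCongr hχN).unique
  rw [leftEnv, trace_sum]
  exact Finset.sum_congr rfl fun σ _ => star_sum_sum_mul_sum_sum_eq_trace _ _

theorem sum_conj_mpsPsi_mul_mpsPsiT {N : ℕ} (χ' : ℕ) (hχ0 : χ 0 = 1) (hχN : χ N = 1) :
    ∑ σ : Fin N → Fin d, starRingEnd ℂ (mpsPsi N χ Γ Λ σ) * mpsPsiT N χ' χ Γ Λ σ =
      (leftEnv (mpsW χ Γ Λ) (mpsWT N χ' χ Γ Λ) N).trace :=
  sum_star_mul_eq_trace_leftEnv hχ0 hχN _ _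

theorem sum_norm_sq_mpsPsiT_le_one {N : ℕ} (χ' : ℕ) (hχ0 : χ 0 = 1) (hχN : χ N = 1)
    (hΛN : Λ N = 1) (hcano : IsCanonicalMPS N χ Γ Λ) (hΛ : ∀ i ≤ N, (Λ i).IsDiag) :
    ∑ σ : Fin N → Fin d, ‖mpsPsiT N χ' χ Γ Λ σ‖ ^ 2 ≤ 1 := by
  have hK : ((∑ σ : Fin N → Fin d, ‖mpsPsiT N χ' χ Γ Λ σ‖ ^ 2 : ℝ) : ℂ) =
      (leftEnv (mpsWT N χ' χ Γ Λ) (mpsWT N χ' χ Γ Λ) N).trace := by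
    rw [← sum_star_mul_eq_trace_leftEnv hχ0 hχN]
    push_cast
    exact Finset.sum_congr rfl fun σ _ => (Complex.conj_mul' _).symm
  have h := trace_le_trace_of_le (leftEnv_mpsWT_le Γ Λ χ' hcano hΛ le_rfl)
  rw [← hK, hΛN] at h
  simp only [conjTranspose_one, Matrix.mul_one, trace_one, Fintype.card_fin, hχN,
    Nat.cast_one] at h
  exact_mod_cast h

end MPS

-- `hzero` covers `r = 0`, where `z / √r` is the junk value `z / 0 = 0`.
theorem one_sub_two_mul_le_norm_div_sqrt_sq {z : ℂ} {r ε : ℝ} (hr0 : 0 ≤ r) (hr1 : r ≤ 1)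
    (hz : ‖z - 1‖ ≤ ε) (hzero : r = 0 → z = 0) :
    1 - 2 * ε ≤ ‖z / (Real.sqrt r : ℂ)‖ ^ 2 := by
  rw [norm_div, Complex.norm_real, Real.norm_of_nonneg (Real.sqrt_nonneg _), div_pow,
    Real.sq_sqrt hr0]
  rcases hr0.eq_or_lt with rfl | hpos
  · simp only [hzero rfl, zero_sub, norm_neg, norm_one, norm_zero, div_zero] at hz ⊢
    linarith
  · have hz1 : 1 - ε ≤ ‖z‖ := by
      have := norm_sub_norm_le (1 : ℂ) z
      rw [norm_one, norm_sub_rev] at this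
      linarith
    have hsq : 1 - 2 * ε ≤ ‖z‖ ^ 2 := by
      rcases le_or_gt ε 1 with hε | hε
      · have := pow_le_pow_left₀ (sub_nonneg.2 hε) hz1 2
        nlinarith [sq_nonneg ε]
      · nlinarith [sq_nonneg ‖z‖]
    exact hsq.trans (le_div_self (sq_nonneg _) hpos hr1)

theorem parallel_mps_compression_fidelity_bound_general
    (N d : ℕ) [NeZero d]
    (χ : ℕ → ℕ) (hχ0 : χ 0 = 1) (hχN : χ N = 1)
    (Γ : (i : ℕ) → Fin d → Matrix (Fin (χ i)) (Fin (χ (i + 1))) ℂ)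
    (Λ : (i : ℕ) → Matrix (Fin (χ i)) (Fin (χ i)) ℂ)
    (hΛ0 : Λ 0 = 1) (hΛN : Λ N = 1)
    (hΛdiag : ∀ i ≤ N, (Λ i).IsDiag)
    (hΛreal : ∀ i ≤ N, ∀ α, (Λ i α α).im = 0 ∧ 0 ≤ (Λ i α α).re)
    (hcano : IsCanonicalMPS N χ Γ Λ)
    (χ' : ℕ) :
    1 - 2 * globErr N χ' χ Λ ≤
      ‖∑ σ : Fin N → Fin d, (starRingEnd ℂ) (mpsPsi N χ Γ Λ σ) *
        (mpsPsiT N χ' χ Γ Λ σ /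
          (Real.sqrt (∑ τ : Fin N → Fin d, ‖mpsPsiT N χ' χ Γ Λ τ‖ ^ 2) : ℂ))‖ ^ 2 := by
  have hoverlap : ‖∑ σ : Fin N → Fin d,
      starRingEnd ℂ (mpsPsi N χ Γ Λ σ) * mpsPsiT N χ' χ Γ Λ σ - 1‖ ≤ globErr N χ' χ Λ := by
    rw [sum_conj_mpsPsi_mul_mpsPsiT Γ Λ χ' hχ0 hχN,
      ← trace_leftEnv_overlap_zero Γ Λ N χ' hχ0 hΛ0]
    exact norm_trace_leftEnv_overlap_sub_le Γ Λ χ' hcano hΛdiag fun i hi α => (hΛreal i hi α).1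
  have hzero : ∑ τ : Fin N → Fin d, ‖mpsPsiT N χ' χ Γ Λ τ‖ ^ 2 = 0 →
      ∑ σ : Fin N → Fin d, starRingEnd ℂ (mpsPsi N χ Γ Λ σ) * mpsPsiT N χ' χ Γ Λ σ = 0 := by
    intro h
    rw [Finset.sum_eq_zero_iff_of_nonneg fun _ _ => sq_nonneg _] at h
    exact Finset.sum_eq_zero fun σ hσ => by simp [by simpa using h σ hσ]
  simpa only [mul_div_assoc, Finset.sum_div] using
    one_sub_two_mul_le_norm_div_sqrt_sq (Finset.sum_nonneg fun _ _ => sq_nonneg _)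
      (sum_norm_sq_mpsPsiT_le_one Γ Λ χ' hχ0 hχN hΛN hcano hΛdiag) hoverlap hzero

/-- Theorem 1 of the paper, fidelity bound: for an `N`-site MPS in canonical
form with normalized wavefunction and a truncation rank `χ'` with `2 ε(χ') < 1`, the fidelity
of the renormalized truncated state `Ψ_T = Ψ̃_T / ‖Ψ̃_T‖` with `Ψ` satisfies
`𝓕₂ = |⟨Ψ, Ψ_T⟩|² ≥ 1 − 2 ε(χ')`. -/
theorem parallel_mps_compression_fidelity_bound
    (N d : ℕ) [NeZero d] (hN : 1 ≤ N)
    (χ : ℕ → ℕ) (hχ0 : χ 0 = 1) (hχN : χ N = 1) (hχpos : ∀ i, 1 ≤ χ i)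
    (Γ : (i : ℕ) → Fin d → Matrix (Fin (χ i)) (Fin (χ (i + 1))) ℂ)
    (Λ : (i : ℕ) → Matrix (Fin (χ i)) (Fin (χ i)) ℂ)
    (hΛ0 : Λ 0 = 1) (hΛN : Λ N = 1)
    (hΛdiag : ∀ i ≤ N, (Λ i).IsDiag)
    (hΛreal : ∀ i ≤ N, ∀ α, (Λ i α α).im = 0 ∧ 0 ≤ (Λ i α α).re)
    (hΛdesc : ∀ i ≤ N, ∀ α β : Fin (χ i), α ≤ β → (Λ i β β).re ≤ (Λ i α α).re)
    (hcano : IsCanonicalMPS N χ Γ Λ)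
    (hnorm : ∑ σ : Fin N → Fin d, ‖mpsPsi N χ Γ Λ σ‖ ^ 2 = 1)
    (χ' : ℕ) (hχ' : 1 ≤ χ')
    (hsmall : 2 * globErr N χ' χ Λ < 1) :
    1 - 2 * globErr N χ' χ Λ ≤
      ‖∑ σ : Fin N → Fin d, (starRingEnd ℂ) (mpsPsi N χ Γ Λ σ) *
        (mpsPsiT N χ' χ Γ Λ σ /
          (Real.sqrt (∑ τ : Fin N → Fin d, ‖mpsPsiT N χ' χ Γ Λ τ‖ ^ 2) : ℂ))‖ ^ 2 :=
  parallel_mps_compression_fidelity_bound_general N d χ hχ0 hχN Γ Λ hΛ0 hΛN hΛdiag hΛreal hcano χ'
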